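/- arXiv:math/0408006 — 4 statements merged into one kernel-verified Lean document; each statement's English description precedes it below -/
import Mathlib

section
/- Let b be a nonzero integer and c, d integers with gcd(b,c)=1 and cd ≡ 1 (mod b). Then the rank-two lattices Λ_{b,c} and Λ_{b,d} with Gram matrices [[0,b],[b,2c]] and [[0,b],[b,2d]] are isomorphic, i.e., there exists A ∈ GL(2,ℤ) with ᵀA·[[0,b],[b,2c]]·A = [[0,b],[b,2d]]. -/
open Matrix

/-! Writing `c * d + b * x = 1`, the matrix `!![-c, x; b, d]` has determinant `-1` and carries
the isotropic vector `(1, 0)` to `(-c, b)`, again isotropic for `!![0, b; b, 2*c]`; expanding the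
congruence, every entry collapses to a multiple of `c * d + b * x`. -/

section

variable {R : Type*} [CommRing R] {b c d x : R}

theorem det_bezoutMatrix (h : c * d + b * x = 1) :
    (!![-c, x; b, d] : Matrix (Fin 2) (Fin 2) R).det = -1 := by
  rw [det_fin_two_of]
  linear_combination -h

theorem transpose_mul_gram_mul_bezoutMatrix (h : c * d + b * x = 1) :
    (!![-c, x; b, d] : Matrix (Fin 2) (Fin 2) R)ᵀ * !![0, b; b, 2*c] * !![-c, x; b, d]
      = !![0, b; b, 2*d] := by
  have hT : (!![-c, x; b, d] : Matrix (Fin 2) (Fin 2) R)ᵀ = !![-c, b; x, d] := by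
    ext i j; fin_cases i <;> fin_cases j <;> rfl
  rw [hT, mul_fin_two, mul_fin_two]
  ext i j
  fin_cases i <;> fin_cases j <;>
    simp only [of_apply, cons_val', cons_val_zero, cons_val_one, cons_val_fin_one, Fin.zero_eta,
      Fin.mk_one, Fin.isValue]
  · ring
  · linear_combination b * h
  · linear_combination b * h
  · linear_combination 2 * d * h

end

theorem stmt0_general (b c d : ℤ)
    (hcd : c * d ≡ 1 [ZMOD b]) :
    ∃ A : Matrix (Fin 2) (Fin 2) ℤ, IsUnit A.det ∧
      Aᵀ * !![0, b; b, 2*c] * A = !![0, b; b, 2*d] := by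
  obtain ⟨x, hx⟩ := hcd.dvd
  have h : c * d + b * x = 1 := by linear_combination -hx
  refine ⟨!![-c, x; b, d], ?_, transpose_mul_gram_mul_bezoutMatrix h⟩
  rw [det_bezoutMatrix h]
  exact isUnit_one.neg

/-- For b ≠ 0, gcd(b,c)=1 and cd ≡ 1 (mod b), the lattices Λ_{b,c} and Λ_{b,d}
with Gram matrices [[0,b],[b,2c]] and [[0,b],[b,2d]] are isomorphic. -/
theorem stmt0 (b c d : ℤ) (hb : b ≠ 0) (hgcd : Int.gcd b c = 1)
    (hcd : c * d ≡ 1 [ZMOD b]) :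
    ∃ A : Matrix (Fin 2) (Fin 2) ℤ, IsUnit A.det ∧
      Aᵀ * !![0, b; b, 2*c] * A = !![0, b; b, 2*d] :=
  stmt0_general b c d hcd
end

section
/- Let b be an odd integer with gcd(b,2c)=1. The discriminant group of the lattice Λ_{b,c} (with Gram matrix [[0,b],[b,2c]]), namely Λ_{b,c}*/Λ_{b,c}, is cyclic of order b², generated by the class of the vector (-2c/b², 1/b) = (1/b²)·(-2c, b). -/
open Matrix

/-- Membership in the dual lattice of ℤ² ⊂ ℚ² with respect to the Gram matrix G. -/
def InDualLattice (G : Matrix (Fin 2) (Fin 2) ℚ) (x : Fin 2 → ℚ) : Prop :=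
  ∀ y : Fin 2 → ℤ, ∃ k : ℤ, dotProduct x (G.mulVec (fun i => (y i : ℚ))) = (k : ℚ)

/-- For odd b with gcd(b,2c)=1, the discriminant group of Λ_{b,c} is cyclic of
order b², generated by the class of u = (1/b²)·(-2c, b): u lies in the dual,
every dual vector is an integer multiple of u plus an integral vector, and
k·u is not integral for 0 < k < b². -/
theorem stmt7 (b c : ℤ) (hodd : Odd b) (hgcd : Int.gcd b (2*c) = 1) :
    InDualLattice !![0, (b:ℚ); (b:ℚ), 2*c]
      ((1/(b:ℚ)^2) • ![(-2*c : ℚ), (b : ℚ)]) ∧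
    (∀ x : Fin 2 → ℚ, InDualLattice !![0, (b:ℚ); (b:ℚ), 2*c] x →
      ∃ (n : ℤ) (l : Fin 2 → ℤ),
        x = (n : ℚ) • ((1/(b:ℚ)^2) • ![(-2*c : ℚ), (b : ℚ)]) + fun i => (l i : ℚ)) ∧
    (∀ k : ℤ, 0 < k → k < b^2 →
      ¬ ∃ l : Fin 2 → ℤ,
        (k : ℚ) • ((1/(b:ℚ)^2) • ![(-2*c : ℚ), (b : ℚ)]) = fun i => (l i : ℚ)) := by
  have hb0 : b ≠ 0 := by rintro rfl; exact (Int.not_odd_iff_even.mpr Even.zero) hodd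
  have hb : (b : ℚ) ≠ 0 := Int.cast_ne_zero.mpr hb0
  refine ⟨?_, ?_, ?_⟩
  · intro y
    refine ⟨y 0, ?_⟩
    simp [dotProduct, Matrix.mulVec, Fin.sum_univ_two]
    field_simp
    ring
  · intro x hx
    obtain ⟨m, hm⟩ := hx ![1, 0]
    obtain ⟨p, hp⟩ := hx ![0, 1]
    simp [dotProduct, Matrix.mulVec, Fin.sum_univ_two] at hm hp
    have hm' : (b : ℚ) * x 1 = m := by linarith [hm]
    have hp' : (b : ℚ) * x 0 + 2 * c * x 1 = p := by linarith [hp]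
    set A := Int.gcdA b (2*c) with hA
    set B := Int.gcdB b (2*c) with hB
    have hbezZ : b * A + (2*c) * B = 1 := by
      have := Int.gcd_eq_gcd_ab b (2*c)
      rw [hgcd] at this
      exact_mod_cast this.symm
    have hbez : (b : ℚ) * A + 2 * c * B = 1 := by exact_mod_cast hbezZ
    refine ⟨m - b * p * B, ![p * A, p * B], ?_⟩
    funext i
    fin_cases i <;> simp <;> push_cast <;> field_simp
    · linear_combination (b:ℚ) * hp' - 2*(c:ℚ) * hm' - (b:ℚ)*(p:ℚ) * hbez
    · linear_combination hm'
  · rintro k hk hk2 ⟨l, hl⟩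
    have hl0 := congrFun hl 0
    have hl1 := congrFun hl 1
    simp at hl0 hl1
    have e1 : (k : ℚ) = b * l 1 := by
      field_simp at hl1
      exact hl1
    have e0 : (-2 : ℚ) * c * k = b^2 * l 0 := by
      field_simp at hl0
      linear_combination hl0
    have e1' : k = b * l 1 := by exact_mod_cast e1
    have e0' : -2 * c * k = b^2 * l 0 := by exact_mod_cast e0
    have hco : IsCoprime b (2*c) := Int.isCoprime_iff_gcd_eq_one.mpr hgcd
    have hdvd : b ∣ l 1 := by
      have h2 : b ∣ 2*c * l 1 := ⟨-(l 0), mul_left_cancel₀ hb0 (show b*(2*c*l 1) = b*(b*-(l 0)) by linear_combination -2*c*e1' - e0')⟩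
      exact hco.dvd_of_dvd_mul_left h2
    obtain ⟨s, hs⟩ := hdvd
    have hdk : b^2 ∣ k := ⟨s, by rw [e1', hs]; ring⟩
    exact absurd (Int.le_of_dvd hk hdk) (not_le.mpr hk2)
end

section
/- Let b > 2 be prime and gcd(b,2c) = gcd(b,2d) = 1. The discriminant quadratic forms of Λ_{b,c} and Λ_{b,d} are isomorphic if and only if there exists an integer a with gcd(a,b)=1 and c ≡ a²d (mod b²). Moreover this condition holds if and only if c ≡ a²d (mod b) for some integer a coprime to b. -/
/-!
An isomorphism of discriminant forms of the cyclic group `ℤ/b²` is multiplication by a unit `u`,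
and it carries `q_d` to `q_c` exactly when `c = u² d` in `ℤ/b²`. To pass from a solution of
`c ≡ a² d (mod b)` to one modulo `b²`, a single Hensel step suffices: `2ad` is invertible
modulo `b`, so `a + s b` works for a suitable `s`.
-/

/-- The discriminant quadratic form of Λ_{b,c} (for gcd(b,2c)=1): on the cyclic
group ℤ/b², the generator g has q(g) = -2c/b² in ℚ/2ℤ. -/
def discForm (b : ℕ) (c : ℤ) (x : ZMod (b^2)) : ℚ ⧸ AddSubgroup.zmultiples (2:ℚ) :=
  QuotientAddGroup.mk (-2 * c * (x.val : ℚ)^2 / (b^2 : ℚ))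

lemma mk_neg_two_mul_div_eq_iff {B : ℤ} (hB : B ≠ 0) (m n : ℤ) :
    (QuotientAddGroup.mk (-2 * m / B : ℚ) : ℚ ⧸ AddSubgroup.zmultiples (2 : ℚ)) =
      QuotientAddGroup.mk (-2 * n / B : ℚ) ↔ B ∣ m - n := by
  have hBQ : (B : ℚ) ≠ 0 := by exact_mod_cast hB
  have hdiff : -(-2 * m / B : ℚ) + -2 * n / B = 2 * ((m - n : ℤ) : ℚ) / B := by
    push_cast; ring
  rw [QuotientAddGroup.eq, hdiff, AddSubgroup.mem_zmultiples_iff]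
  refine exists_congr fun k => ?_
  rw [zsmul_eq_mul, eq_div_iff hBQ, eq_comm, ← Int.cast_inj (α := ℚ)]
  push_cast
  constructor <;> intro h <;> linarith

lemma discForm_eq_iff {b : ℕ} (hb : b ≠ 0) (c d : ℤ) (x y : ZMod (b ^ 2)) :
    discForm b d y = discForm b c x ↔ (d : ZMod (b ^ 2)) * y ^ 2 = c * x ^ 2 := by
  have : NeZero (b ^ 2) := ⟨pow_ne_zero 2 hb⟩
  have hform (e : ℤ) (z : ZMod (b ^ 2)) : discForm b e z =
      QuotientAddGroup.mk (-2 * ((e * z.val ^ 2 : ℤ) : ℚ) / ((b ^ 2 : ℤ) : ℚ)) := by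
    rw [discForm]; push_cast; ring_nf
  rw [hform, hform, mk_neg_two_mul_div_eq_iff (by positivity), ← Int.natCast_pow,
    ← ZMod.intCast_eq_intCast_iff_dvd_sub, eq_comm]
  push_cast
  simp only [ZMod.natCast_val, ZMod.cast_id', id]

lemma Int.exists_modEq_sq_mul_iff_exists_units (n : ℕ) (c d : ℤ) :
    (∃ a : ℤ, IsCoprime a n ∧ c ≡ a ^ 2 * d [ZMOD n]) ↔
      ∃ u : (ZMod n)ˣ, (c : ZMod n) = (u : ZMod n) ^ 2 * d := by
  constructor
  · rintro ⟨a, ha, hmod⟩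
    have ha' : IsUnit (a : ZMod n) := (ZMod.coe_int_isUnit_iff_isCoprime a n).mpr ha.symm
    refine ⟨ha'.unit, ?_⟩
    rw [IsUnit.unit_spec]
    exact_mod_cast (ZMod.intCast_eq_intCast_iff _ _ n).mpr hmod
  · rintro ⟨u, hu⟩
    refine ⟨(u : ZMod n).valMinAbs, ?_, ?_⟩
    · rw [isCoprime_comm, ← ZMod.coe_int_isUnit_iff_isCoprime, ZMod.coe_valMinAbs]
      exact u.isUnit
    · rw [← ZMod.intCast_eq_intCast_iff]
      push_cast
      exact hu

lemma Int.exists_modEq_sq_mul_add_mul_of_modEq {n a c d : ℤ} (h : IsCoprime (2 * a * d) n)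
    (hmod : c ≡ a ^ 2 * d [ZMOD n]) : ∃ s, c ≡ (a + s * n) ^ 2 * d [ZMOD n ^ 2] := by
  obtain ⟨t, ht⟩ := (Int.modEq_iff_dvd.mp hmod)
  obtain ⟨u, v, huv⟩ := h
  refine ⟨-t * u, Int.modEq_iff_dvd.mpr ⟨t * v + t ^ 2 * u ^ 2 * d, ?_⟩⟩
  linear_combination ht - n * t * huv

lemma Int.exists_modEq_sq_mul_iff_of_isCoprime {n c d : ℤ} (hd : IsCoprime (2 * d) n) :
    (∃ a, IsCoprime a n ∧ c ≡ a ^ 2 * d [ZMOD n ^ 2]) ↔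
      ∃ a, IsCoprime a n ∧ c ≡ a ^ 2 * d [ZMOD n] := by
  constructor
  · rintro ⟨a, ha, hmod⟩
    exact ⟨a, ha, hmod.of_dvd (dvd_pow_self n two_ne_zero)⟩
  · rintro ⟨a, ha, hmod⟩
    have had : IsCoprime (2 * a * d) n := by
      rw [mul_right_comm]; exact hd.mul_left ha
    obtain ⟨s, hs⟩ := Int.exists_modEq_sq_mul_add_mul_of_modEq had hmod
    exact ⟨a + s * n, ha.add_mul_right_left s, hs⟩

lemma exists_addEquiv_discForm_iff {b : ℕ} (hb : b ≠ 0) {c : ℤ} (hc : IsCoprime (b : ℤ) c)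
    (d : ℤ) :
    (∃ φ : ZMod (b ^ 2) ≃+ ZMod (b ^ 2), ∀ x, discForm b d (φ x) = discForm b c x) ↔
      ∃ u : (ZMod (b ^ 2))ˣ, (c : ZMod (b ^ 2)) = (u : ZMod (b ^ 2)) ^ 2 * d := by
  simp only [discForm_eq_iff hb]
  constructor
  · rintro ⟨φ, hφ⟩
    have h1 : (c : ZMod (b ^ 2)) = φ 1 ^ 2 * d := by simpa [mul_comm] using (hφ 1).symm
    have hc1 : IsUnit (c : ZMod (b ^ 2)) := by
      rw [ZMod.coe_int_isUnit_iff_isCoprime]; push_cast; exact hc.pow_left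
    rw [h1] at hc1
    have hu : IsUnit (φ 1) := (isUnit_pow_iff two_ne_zero).mp (isUnit_of_mul_isUnit_left hc1)
    exact ⟨hu.unit, by rw [hu.unit_spec, h1]⟩
  · rintro ⟨u, hu⟩
    refine ⟨DistribMulAction.toAddEquiv _ u, fun x => ?_⟩
    rw [DistribMulAction.toAddEquiv_apply, Units.smul_def, smul_eq_mul, hu]
    ring

theorem stmt8_general (b : ℕ) (c d : ℤ)
    (hc : Int.gcd (b : ℤ) (2*c) = 1) (hd : Int.gcd (b : ℤ) (2*d) = 1) :
    ((∃ φ : ZMod (b^2) ≃+ ZMod (b^2), ∀ x, discForm b d (φ x) = discForm b c x) ↔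
      ∃ a : ℤ, Int.gcd a (b : ℤ) = 1 ∧ c ≡ a^2 * d [ZMOD ((b : ℤ)^2)]) ∧
    ((∃ a : ℤ, Int.gcd a (b : ℤ) = 1 ∧ c ≡ a^2 * d [ZMOD ((b : ℤ)^2)]) ↔
      ∃ a : ℤ, Int.gcd a (b : ℤ) = 1 ∧ c ≡ a^2 * d [ZMOD (b : ℤ)]) := by
  rw [← Int.isCoprime_iff_gcd_eq_one] at hc hd
  have hb : b ≠ 0 := by
    rintro rfl
    rw [Nat.cast_zero, isCoprime_zero_left, Int.isUnit_iff] at hc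
    omega
  simp only [← Int.isCoprime_iff_gcd_eq_one]
  refine ⟨?_, Int.exists_modEq_sq_mul_iff_of_isCoprime hd.symm⟩
  rw [exists_addEquiv_discForm_iff hb hc.of_mul_right_right,
    ← Int.exists_modEq_sq_mul_iff_exists_units]
  simp only [Nat.cast_pow, IsCoprime.pow_right_iff two_pos]

/-- For b > 2 prime and gcd(b,2c) = gcd(b,2d) = 1, the discriminant forms of
Λ_{b,c} and Λ_{b,d} are isomorphic iff c ≡ a²d (mod b²) for some a coprime to b,
and that holds iff c ≡ a²d (mod b) for some a coprime to b. -/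
theorem stmt8 (b : ℕ) (hp : b.Prime) (h2 : 2 < b) (c d : ℤ)
    (hc : Int.gcd (b : ℤ) (2*c) = 1) (hd : Int.gcd (b : ℤ) (2*d) = 1) :
    ((∃ φ : ZMod (b^2) ≃+ ZMod (b^2), ∀ x, discForm b d (φ x) = discForm b c x) ↔
      ∃ a : ℤ, Int.gcd a (b : ℤ) = 1 ∧ c ≡ a^2 * d [ZMOD ((b : ℤ)^2)]) ∧
    ((∃ a : ℤ, Int.gcd a (b : ℤ) = 1 ∧ c ≡ a^2 * d [ZMOD ((b : ℤ)^2)]) ↔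
      ∃ a : ℤ, Int.gcd a (b : ℤ) = 1 ∧ c ≡ a^2 * d [ZMOD (b : ℤ)]) :=
  stmt8_general b c d hc hd
end

section
/- Let d ≥ 1 be an even integer, write d = 2^r·e with e odd and r ≥ 1. Then there exists an integer x with x² ≡ 1 - 4d (mod 16d). -/
/- Since (1 + 2dk)² - (1 - 4d) = 4d(k + 1 + dk²), it suffices to make k + 1 + dk² divisible by 4;
for even d = 2m the choice k = d + 3 gives k + 1 + dk² = 4(2m³ + 6m² + 5m + 1). -/
theorem Int.exists_sq_modEq_one_sub_four_mul_of_even {d : ℤ} (hd : Even d) :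
    ∃ x : ℤ, x ^ 2 ≡ 1 - 4 * d [ZMOD 16 * d] := by
  obtain ⟨m, rfl⟩ := hd
  refine ⟨1 + 2 * (m + m) * (m + m + 3), Int.modEq_iff_dvd.mpr ?_⟩
  exact ⟨-(2 * m ^ 3 + 6 * m ^ 2 + 5 * m + 1), by ring⟩

theorem stmt16_general (d e : ℤ) (r : ℕ) (hr : 1 ≤ r)
    (hde : d = 2^r * e) :
    ∃ x : ℤ, x^2 ≡ 1 - 4*d [ZMOD 16*d] := by
  have hd : Even d := hde ▸ ((Int.even_pow.mpr ⟨even_two, by omega⟩).mul_right e)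
  exact Int.exists_sq_modEq_one_sub_four_mul_of_even hd

/-- For even d ≥ 1, written d = 2^r·e with e odd and r ≥ 1, there exists an
integer x with x² ≡ 1 - 4d (mod 16d). -/
theorem stmt16 (d e : ℤ) (r : ℕ) (hr : 1 ≤ r) (he : Odd e)
    (hde : d = 2^r * e) (hd : 1 ≤ d) :
    ∃ x : ℤ, x^2 ≡ 1 - 4*d [ZMOD 16*d] :=
  stmt16_general d e r hr hde
end
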